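/- Let P be a d-dimensional simplicial reflexive polytope with a centrally symmetric pair of facets F and −F, with vertices of F denoted e_1, …, e_d, and let e_1*, …, e_d* be the dual ℝ-basis of N_ℝ. Let u = η_F and let v be a vertex of P with ⟨u, v⟩ = 0. Writing v = Σ q_i e_i with q_i ∈ ℚ, one has for each i: q_i < 0 if and only if q_i = −1. Moreover, there exist disjoint subsets I, J ⊆ {1,…,d} with |I| = |J| such that v = Σ_{j∈J} e_j − Σ_{i∈I} e_i. -/

import Mathlib

open Pointwise Matrix

/-- Ambient space `ℝ^d`. -/
abbrev E (d : ℕ) := Fin d → ℝ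

/-- A point of the lattice `M ≅ ℤ^d`. -/
def IsLatticePt {d : ℕ} (x : E d) : Prop := ∀ i, ∃ n : ℤ, x i = (n : ℝ)

/-- The standard pairing between `N_ℝ` and `M_ℝ`. -/
def dot {d : ℕ} (x y : E d) : ℝ := ∑ i, x i * y i

/-- The dual (polar) polytope `P* = {x : ⟨x,y⟩ ≥ -1 ∀ y ∈ P}`. -/
def polarDual {d : ℕ} (P : Set (E d)) : Set (E d) := {x | ∀ y ∈ P, -1 ≤ dot x y}

/-- A lattice polytope: convex hull of finitely many lattice points. -/
def IsLatticePolytope {d : ℕ} (P : Set (E d)) : Prop :=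
  ∃ S : Finset (E d), (∀ x ∈ S, IsLatticePt x) ∧ P = convexHull ℝ (S : Set (E d))

/-- A reflexive polytope: a lattice polytope with `0` in its interior whose polar dual is
again a lattice polytope (i.e. the hull of its lattice points). -/
def IsReflexive {d : ℕ} (P : Set (E d)) : Prop :=
  IsLatticePolytope P ∧ 0 ∈ interior P ∧
    polarDual P = convexHull ℝ {x | x ∈ polarDual P ∧ IsLatticePt x}

/-- A facet: a nonempty exposed face of dimension `d - 1`. -/
def IsFacet {d : ℕ} (P F : Set (E d)) : Prop :=
  IsExposed ℝ P F ∧ F.Nonempty ∧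
    Module.finrank ℝ (affineSpan ℝ F).direction = d - 1

/-- Simplicial polytope: every facet is a simplex (hull of `d` affinely independent points). -/
def IsSimplicial {d : ℕ} (P : Set (E d)) : Prop :=
  ∀ F, IsFacet P F → ∃ v : Fin d → E d,
    AffineIndependent ℝ v ∧ F = convexHull ℝ (Set.range v)

/-- Pseudo-symmetric: some facet `F` has `-F` also a facet. -/
def IsPseudoSymmetric {d : ℕ} (P : Set (E d)) : Prop :=
  ∃ F, IsFacet P F ∧ IsFacet P (-F)

/-- Application of an integer matrix to a point of `ℝ^d`. -/
def applyU {d : ℕ} (U : Matrix (Fin d) (Fin d) ℤ) (x : E d) : E d :=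
  (U.map (Int.cast : ℤ → ℝ)) *ᵥ x

/-- Wirth matrix: block form `[[2·Id_f, 0], [C, Id_{d-f}]]` with `C` a `{0,1}`-matrix
each of whose columns has an odd number of `1`'s. -/
def IsWirth {d : ℕ} (A : Matrix (Fin d) (Fin d) ℤ) : Prop :=
  ∃ f : ℕ, f < d ∧
    (∀ i j : Fin d, (i : ℕ) < f → (j : ℕ) < f → A i j = if i = j then 2 else 0) ∧
    (∀ i j : Fin d, (i : ℕ) < f → f ≤ (j : ℕ) → A i j = 0) ∧
    (∀ i j : Fin d, f ≤ (i : ℕ) → (j : ℕ) < f → A i j = 0 ∨ A i j = 1) ∧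
    (∀ i j : Fin d, f ≤ (i : ℕ) → f ≤ (j : ℕ) → A i j = if i = j then 1 else 0) ∧
    (∀ j : Fin d, (j : ℕ) < f →
      Odd (Finset.univ.filter (fun i : Fin d => f ≤ (i : ℕ) ∧ A i j = 1)).card)


/-!
Let `u' = u + t e_k*` for a small `t > 0`; it still lies in the dual polytope, which is the convex
hull of its lattice points, and it equals `-1` on the `e_j` with `j ≠ k` but not on `e_k`. Some
lattice point `w` of the dual polytope must then do the same, so `w = -1` on the `e_j`, `j ≠ k`,
and `n = ⟨w, e_k⟩ ∈ {0, 1}` because `-e_k ∈ P`. Since `∑ q_i = 0`, `⟨w, v⟩ = (n + 1) q_k` is an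
integer in `[-1, 0)`, hence `(n + 1) q_k = -1`. If `n = 1`, the facet `{w = -1}` of the simplicial
polytope `P` would contain the `d + 1` vertices `v`, `-e_k` and `e_j` (`j ≠ k`); so `n = 0` and
`q_k = -1`. Exchanging `F` and `-F` gives `q_k = 1` whenever `q_k > 0`.
-/

open Set Filter Topology

section

variable {d : ℕ}

lemma dot_eq_dotProduct (x y : E d) : dot x y = x ⬝ᵥ y := rfl

@[simp] lemma dot_neg_left (w y : E d) : dot (-w) y = -dot w y := neg_dotProduct w y

@[simp] lemma dot_neg_right (w y : E d) : dot w (-y) = -dot w y := dotProduct_neg w y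

lemma dot_sum_smul {ι : Type*} [Fintype ι] (w : E d) (c : ι → ℝ) (f : ι → E d) :
    dot w (∑ i, c i • f i) = ∑ i, c i * dot w (f i) := by
  simp [dot_eq_dotProduct, dotProduct_sum, dotProduct_smul]

lemma dot_add_smul_left (u w y : E d) (t : ℝ) : dot (u + t • w) y = dot u y + t * dot w y := by
  simp [dot_eq_dotProduct, add_dotProduct, smul_dotProduct]

noncomputable def dotDual (w : E d) : Module.Dual ℝ (E d) := dotProductEquiv ℝ (Fin d) w

@[simp] lemma dotDual_apply (w y : E d) : dotDual w y = dot w y := rfl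

lemma IsLatticePt.exists_dot_eq_intCast {x y : E d} (hx : IsLatticePt x) (hy : IsLatticePt y) :
    ∃ n : ℤ, dot x y = n := by
  choose a ha using hx
  choose b hb using hy
  exact ⟨∑ i, a i * b i, by simp [dot, ha, hb]⟩

lemma le_dot_of_mem_convexHull {A : Set (E d)} {w : E d} {r : ℝ} (h : ∀ a ∈ A, r ≤ dot w a)
    {x : E d} (hx : x ∈ convexHull ℝ A) : r ≤ dot w x :=
  convexHull_min h (convex_halfSpace_ge (dotDual w).isLinear r) hx

lemma polarDual_convexHull (A : Set (E d)) : polarDual (convexHull ℝ A) = polarDual A :=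
  Subset.antisymm (fun _ hx y hy => hx y (subset_convexHull ℝ A hy))
    fun _ hx _ hy => le_dot_of_mem_convexHull hx hy

lemma single_mem_extremePoints_stdSimplex {ι : Type*} [Fintype ι] [DecidableEq ι] (i : ι) :
    (Pi.single i 1 : ι → ℝ) ∈ (stdSimplex ℝ ι).extremePoints ℝ := by
  refine ⟨single_mem_stdSimplex ℝ i, ?_⟩
  rintro x hx y hy ⟨a, b, ha, hb, -, hxy⟩
  have hx0 : ∀ j ≠ i, x j = 0 := fun j hj => by
    have := congrFun hxy j
    simp only [Pi.add_apply, Pi.smul_apply, smul_eq_mul, Pi.single_apply, hj, if_false] at this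
    nlinarith [hx.1 j, hy.1 j]
  have hxi : x i = 1 := by
    rw [← hx.2, Finset.sum_eq_single i (fun j _ hj => hx0 j hj) (by simp)]
  ext j
  by_cases hj : j = i
  · subst hj; simp [hxi]
  · simp [hj, hx0 j hj]

lemma Module.Basis.mem_extremePoints_convexHull {ι V : Type*} [Fintype ι] [AddCommGroup V]
    [Module ℝ V] (b : Module.Basis ι ℝ V) (i : ι) :
    b i ∈ (convexHull ℝ (range b)).extremePoints ℝ := by
  classical
  have himage : b.equivFun '' convexHull ℝ (range b) = stdSimplex ℝ ι := by
    rw [← convexHull_rangle_single_eq_stdSimplex, ← LinearEquiv.coe_toLinearMap,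
      LinearMap.image_convexHull, ← range_comp]
    congr 2
    ext j l
    simp [Module.Basis.equivFun_self, Pi.single_apply, eq_comm]
  have hsingle := single_mem_extremePoints_stdSimplex (ι := ι) i
  rw [← himage, ← image_extremePoints] at hsingle
  obtain ⟨x, hx, hxi⟩ := hsingle
  convert hx
  apply b.equivFun.injective
  rw [hxi]
  ext j
  simp [Module.Basis.equivFun_self, Pi.single_apply, eq_comm]

noncomputable def basisOfLinearIndependentFin {e : Fin d → E d} (he : LinearIndependent ℝ e) :
    Module.Basis (Fin d) ℝ (E d) :=
  basisOfLinearIndependentOfCardEqFinrank' e he (by simp)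

@[simp] lemma coe_basisOfLinearIndependentFin {e : Fin d → E d} (he : LinearIndependent ℝ e) :
    ⇑(basisOfLinearIndependentFin he) = e :=
  coe_basisOfLinearIndependentOfCardEqFinrank' e he _

lemma LinearIndependent.mem_extremePoints_convexHull {e : Fin d → E d}
    (he : LinearIndependent ℝ e) (i : Fin d) :
    e i ∈ (convexHull ℝ (range e)).extremePoints ℝ := by
  simpa using (basisOfLinearIndependentFin he).mem_extremePoints_convexHull i

lemma exists_dot_eq_ite {e : Fin d → E d} (he : LinearIndependent ℝ e) (k : Fin d) :
    ∃ w : E d, ∀ j, dot w (e j) = if j = k then 1 else 0 := by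
  set b := basisOfLinearIndependentFin he
  obtain ⟨w, hw⟩ : ∃ w, dotDual w = b.coord k := (dotProductEquiv ℝ (Fin d)).surjective _
  refine ⟨w, fun j => ?_⟩
  have hbj : b j = e j := by simp [b]
  rw [← hbj, ← dotDual_apply, hw, b.coord_apply, b.repr_self, Finsupp.single_apply]

/-- The exposing functional of `G` agrees with a positive multiple of `-w` on the basis `f`. -/
lemma IsExposed.eq_setOf_dot_eq {P G : Set (E d)} {w : E d} (hG : IsExposed ℝ P G)
    (hne : G.Nonempty) (h0 : (0 : E d) ∈ P) {f : Fin d → E d} (hf : LinearIndependent ℝ f)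
    (hfG : ∀ i, f i ∈ G) (hw : ∀ y ∈ G, dot w y = -1) :
    w ∈ polarDual P ∧ G = {x ∈ P | dot w x = -1} := by
  obtain ⟨l, rfl⟩ := hG hne
  obtain ⟨p, hpP, hp⟩ := hne
  have hlG : ∀ x ∈ {x ∈ P | ∀ y ∈ P, l y ≤ l x}, l x = l p := fun x hx =>
    le_antisymm (hp x hx.1) (hx.2 p hpP)
  have hl : ∀ y, l y = -l p * dot w y := by
    have : (l : E d →ₗ[ℝ] ℝ) = -l p • dotDual w :=
      (basisOfLinearIndependentFin hf).ext fun i => by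
        simp only [coe_basisOfLinearIndependentFin, ContinuousLinearMap.coe_coe,
          LinearMap.smul_apply, dotDual_apply, smul_eq_mul, hlG _ (hfG i), hw _ (hfG i)]
        ring
    exact fun y => by simpa using LinearMap.congr_fun this y
  have hc : 0 < l p := by
    refine lt_of_le_of_ne (by simpa using hp 0 h0) fun hc => ?_
    have := hw 0 ⟨h0, fun y _ => by rw [hl y, hl 0, ← hc]; simp⟩
    simp [dot] at this
  refine ⟨fun y hy => ?_, ?_⟩
  · have := hp y hy
    rw [hl] at this
    nlinarith
  · ext x
    refine ⟨fun hx => ⟨hx.1, hw x hx⟩, fun hx => ⟨hx.1, fun y hy => ?_⟩⟩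
    rw [hl x, hx.2]
    linarith [hp y hy]

lemma exists_pos_add_smul_mem_polarDual {S : Finset (E d)} {u w : E d}
    (hu : u ∈ polarDual (S : Set (E d))) (hw : ∀ s ∈ S, dot u s = -1 → 0 ≤ dot w s) :
    ∃ t : ℝ, 0 < t ∧ u + t • w ∈ polarDual (S : Set (E d)) := by
  have h : ∀ s ∈ S, ∀ᶠ t in 𝓝[>] (0 : ℝ), -1 ≤ dot (u + t • w) s := by
    intro s hs
    rcases (hu s hs).lt_or_eq with hlt | heq
    · have hlim : Tendsto (fun t : ℝ => dot u s + t * dot w s) (𝓝 0) (𝓝 (dot u s)) :=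
        (by fun_prop : Continuous fun t : ℝ => dot u s + t * dot w s).tendsto' 0 _ (by simp)
      filter_upwards [nhdsWithin_le_nhds (hlim.eventually_const_lt hlt)] with t ht
      exact (dot_add_smul_left u w s t).symm ▸ ht.le
    · filter_upwards [self_mem_nhdsWithin] with t (ht : 0 < t)
      rw [dot_add_smul_left, ← heq]
      nlinarith [hw s hs heq.symm]
  obtain ⟨t, htS, ht⟩ := (((eventually_all_finset S).2 h).and self_mem_nhdsWithin).exists
  exact ⟨t, ht, htS⟩

lemma exists_mem_dot_eq_of_mem_convexHull {A Y : Set (E d)} {x y₀ : E d}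
    (hx : x ∈ convexHull ℝ A) (hA : ∀ a ∈ A, ∀ y ∈ Y, -1 ≤ dot a y)
    (hxY : ∀ y ∈ Y, dot x y = -1) (hxy₀ : -1 < dot x y₀) :
    ∃ a ∈ A, (∀ y ∈ Y, dot a y = -1) ∧ -1 < dot a y₀ := by
  obtain ⟨ι, _, c, z, hc0, hc1, hzA, rfl⟩ := mem_convexHull_iff_exists_fintype.1 hx
  have hdot : ∀ y, dot (∑ i, c i • z i) y = ∑ i, c i * dot (z i) y := by
    simp [dot_eq_dotProduct, sum_dotProduct, smul_dotProduct]
  have htight : ∀ i, c i ≠ 0 → ∀ y ∈ Y, dot (z i) y = -1 := by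
    intro i hi y hy
    have hsum : ∑ j, c j * (dot (z j) y + 1) = 0 := by
      simp only [mul_add, Finset.sum_add_distrib, ← hdot, hxY y hy, mul_one, hc1]
      ring
    have hzero := (Finset.sum_eq_zero_iff_of_nonneg fun j _ =>
      mul_nonneg (hc0 j) (by linarith [hA _ (hzA j) y hy])).1 hsum i (Finset.mem_univ i)
    rcases mul_eq_zero.1 hzero with h | h
    · exact absurd h hi
    · linarith
  by_contra! hcon
  have : dot (∑ i, c i • z i) y₀ ≤ -1 := by
    rw [hdot]
    calc ∑ i, c i * dot (z i) y₀ ≤ ∑ i, c i * (-1) := Finset.sum_le_sum fun i _ => by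
          rcases eq_or_ne (c i) 0 with h | h
          · simp [h]
          · exact mul_le_mul_of_nonneg_left (hcon _ (hzA i) (htight i h)) (hc0 i)
      _ = -1 := by rw [← Finset.sum_mul, hc1]; ring
  linarith

lemma exists_latticePt_mem_polarDual_dot_eq {P : Set (E d)} {S : Finset (E d)}
    (hPS : P = convexHull ℝ (S : Set (E d)))
    (hdual : polarDual P = convexHull ℝ {x | x ∈ polarDual P ∧ IsLatticePt x})
    {e : Fin d → E d} (he : LinearIndependent ℝ e) (heP : ∀ i, e i ∈ P) {u : E d}
    (hu : u ∈ polarDual P) (hue : ∀ i, dot u (e i) = -1)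
    (hF : ∀ x ∈ P, dot u x = -1 → x ∈ convexHull ℝ (range e)) (k : Fin d) :
    ∃ w ∈ polarDual P, IsLatticePt w ∧ (∀ j ≠ k, dot w (e j) = -1) ∧ -1 < dot w (e k) := by
  obtain ⟨φ, hφ⟩ := exists_dot_eq_ite he k
  have hφS : ∀ s ∈ S, dot u s = -1 → 0 ≤ dot φ s := fun s hs hus =>
    le_dot_of_mem_convexHull (by rintro _ ⟨j, rfl⟩; rw [hφ]; split_ifs <;> norm_num)
      (hF s (hPS ▸ subset_convexHull ℝ _ hs) hus)
  obtain ⟨t, ht, htS⟩ := exists_pos_add_smul_mem_polarDual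
    (by rwa [← polarDual_convexHull, ← hPS]) hφS
  have hu' : u + t • φ ∈ convexHull ℝ {x | x ∈ polarDual P ∧ IsLatticePt x} := by
    rwa [← hdual, hPS, polarDual_convexHull]
  have hdot : ∀ j, dot (u + t • φ) (e j) = -1 + t * if j = k then 1 else 0 := fun j => by
    rw [dot_add_smul_left, hue, hφ]
  obtain ⟨w, ⟨hwP, hwlat⟩, hwY, hwk⟩ := exists_mem_dot_eq_of_mem_convexHull hu'
    (Y := e '' {j | j ≠ k}) (fun a ha _ ⟨j, _, hj⟩ => hj ▸ ha.1 _ (heP j))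
    (by rintro _ ⟨j, hj, rfl⟩; rw [hdot, if_neg (show j ≠ k from hj)]; ring)
    (by rw [hdot, if_pos rfl]; linarith)
  exact ⟨w, hwP, hwlat, fun j hj => hwY _ ⟨j, hj, rfl⟩, hwk⟩

lemma dot_sum_smul_of_dot_eq_neg_one {ι : Type*} [Fintype ι] {e : ι → E d} {q : ι → ℝ}
    {w : E d} {k : ι} (hq0 : ∑ i, q i = 0) (hw : ∀ j ≠ k, dot w (e j) = -1) :
    dot w (∑ i, q i • e i) = (dot w (e k) + 1) * q k := by
  calc dot w (∑ i, q i • e i) = ∑ i, q i * (dot w (e i) + 1) - ∑ i, q i := by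
        simp [dot_sum_smul, mul_add, Finset.sum_add_distrib]
    _ = (dot w (e k) + 1) * q k := by
        rw [hq0, sub_zero, Finset.sum_eq_single k (fun j _ hj => by rw [hw j hj]; ring)
          (by simp), mul_comm]

lemma isFacet_setOf_dot_eq [Nonempty (Fin d)] {P : Set (E d)} {w : E d}
    (hw : w ∈ polarDual P) {g : Fin d → E d} (hg : LinearIndependent ℝ g)
    (hgP : ∀ j, g j ∈ P) (hgw : ∀ j, dot w (g j) = -1) :
    IsFacet P {x ∈ P | dot w x = -1} := by
  set G := {x ∈ P | dot w x = -1}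
  have hgG : ∀ j, g j ∈ G := fun j => ⟨hgP j, hgw j⟩
  obtain ⟨j₀⟩ := ‹Nonempty (Fin d)›
  have hd : 0 < d := Fin.pos_iff_nonempty.2 ⟨j₀⟩
  refine ⟨fun _ => ⟨LinearMap.toContinuousLinearMap (-dotDual w), ?_⟩, ⟨_, hgG j₀⟩,
    le_antisymm ?_ ?_⟩
  · ext x
    simp only [G, mem_ofPred_eq, LinearMap.coe_toContinuousLinearMap', LinearMap.neg_apply,
      dotDual_apply, neg_le_neg_iff]
    refine ⟨fun hx => ⟨hx.1, fun y hy => hx.2 ▸ hw y hy⟩,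
      fun hx => ⟨hx.1, le_antisymm ?_ (hw x hx.1)⟩⟩
    simpa [hgw j₀] using hx.2 _ (hgP j₀)
  · have hker : (affineSpan ℝ G).direction ≤ LinearMap.ker (dotDual w) := by
      rw [direction_affineSpan, vectorSpan_def, Submodule.span_le]
      rintro _ ⟨x, hx, y, hy, rfl⟩
      simp only [SetLike.mem_coe, LinearMap.mem_ker, vsub_eq_sub, map_sub, dotDual_apply, hx.2,
        hy.2, sub_self]
    have hne : dotDual w ≠ 0 := fun h => by
      simpa [hgw j₀] using LinearMap.congr_fun h (g j₀)
    have hker_rank : Module.finrank ℝ (LinearMap.ker (dotDual w)) + 1 = d :=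
      (Module.Dual.finrank_ker_add_one_of_ne_zero hne).trans (Module.finrank_fin_fun ℝ)
    exact (Submodule.finrank_mono hker).trans_eq (Nat.eq_sub_of_add_eq hker_rank)
  · rw [direction_affineSpan, ← hg.affineIndependent.finrank_vectorSpan (n := d - 1)
      (by simp; omega)]
    exact Submodule.finrank_mono (vectorSpan_mono ℝ (range_subset_iff.2 hgG))

lemma IsSimplicial.card_le {P G : Set (E d)} (hsimp : IsSimplicial P) (hG : IsFacet P G)
    {T : Finset (E d)} (hT : ∀ x ∈ T, x ∈ P.extremePoints ℝ ∧ x ∈ G) : T.card ≤ d := by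
  classical
  obtain ⟨b, -, hGb⟩ := hsimp G hG
  have hTb : T ⊆ Finset.univ.image b := by
    intro x hx
    have hxG : x ∈ G.extremePoints ℝ :=
      inter_extremePoints_subset_extremePoints_of_subset hG.1.subset ⟨(hT x hx).2, (hT x hx).1⟩
    rw [hGb] at hxG
    obtain ⟨j, rfl⟩ := extremePoints_convexHull_subset hxG
    simp
  simpa using (Finset.card_le_card hTb).trans Finset.card_image_le

/-- Otherwise the facet `{w = -1}` of `P` would contain `d + 1` vertices. -/
lemma IsSimplicial.dot_ne_neg_one [Nonempty (Fin d)] {P : Set (E d)} (hsimp : IsSimplicial P)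
    {w : E d} (hw : w ∈ polarDual P) {g : Fin d → E d} (hg : LinearIndependent ℝ g)
    (hgP : ∀ j, g j ∈ P.extremePoints ℝ) (hgw : ∀ j, dot w (g j) = -1) {v : E d}
    (hv : v ∈ P.extremePoints ℝ) (hvg : v ∉ range g) : dot w v ≠ -1 := by
  classical
  intro hwv
  have hcard := hsimp.card_le (isFacet_setOf_dot_eq hw hg (fun j => (hgP j).1) hgw)
    (T := insert v (Finset.univ.image g)) (by
      simp only [Finset.mem_insert, Finset.mem_image, Finset.mem_univ, true_and]
      rintro x (rfl | ⟨j, rfl⟩)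
      exacts [⟨hv, hv.1, hwv⟩, ⟨hgP j, (hgP j).1, hgw j⟩])
  rw [Finset.card_insert_of_notMem (by simpa using hvg),
    Finset.card_image_of_injective _ hg.injective] at hcard
  simp at hcard

lemma IsSimplicial.dot_ne_neg_one_of_update_neg {P : Set (E d)} (hsimp : IsSimplicial P)
    {w : E d} (hw : w ∈ polarDual P) {e : Fin d → E d} (he : LinearIndependent ℝ e)
    (hext : ∀ i, e i ∈ P.extremePoints ℝ ∧ -e i ∈ P.extremePoints ℝ) {u : E d}
    (hue : ∀ i, dot u (e i) = -1) {v : E d} (hv : v ∈ P.extremePoints ℝ) (huv : dot u v = 0)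
    {k : Fin d} (hwe : ∀ j ≠ k, dot w (e j) = -1) (hwk : dot w (e k) = 1) : dot w v ≠ -1 := by
  have : Nonempty (Fin d) := ⟨k⟩
  refine hsimp.dot_ne_neg_one hw
    (he.update k (-e k) ⟨1, one_mem _, Finsupp.single k (-1), by simp, by simp⟩)
    (fun j => ?_) (fun j => ?_) hv ?_
  · rcases eq_or_ne j k with rfl | hj
    · simpa using (hext j).2
    · simpa [hj] using (hext j).1
  · rcases eq_or_ne j k with rfl | hj
    · simpa using hwk
    · simpa [hj] using hwe j hj
  · rintro ⟨j, rfl⟩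
    rcases eq_or_ne j k with rfl | hj
    · simp [hue] at huv
    · simp [hj, hue] at huv

theorem coeff_eq_neg_one_of_neg {P F : Set (E d)} {S : Finset (E d)}
    (hS : ∀ x ∈ S, IsLatticePt x) (hPS : P = convexHull ℝ (S : Set (E d)))
    (hdual : polarDual P = convexHull ℝ {x | x ∈ polarDual P ∧ IsLatticePt x})
    (h0 : (0 : E d) ∈ P) (hsimp : IsSimplicial P) {e : Fin d → E d}
    (he : LinearIndependent ℝ e) (hFe : F = convexHull ℝ (range e)) (hF : IsExposed ℝ P F)
    (hFneg : IsExposed ℝ P (-F)) {u : E d} (hu : ∀ y ∈ F, dot u y = -1) {v : E d}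
    (hv : v ∈ P.extremePoints ℝ) {q : Fin d → ℝ} (hq : v = ∑ i, q i • e i)
    (hq0 : ∑ i, q i = 0) {k : Fin d} (hk : q k < 0) : q k = -1 := by
  have heF : ∀ i, e i ∈ F := fun i => hFe ▸ subset_convexHull ℝ _ (mem_range_self i)
  have hue : ∀ i, dot u (e i) = -1 := fun i => hu _ (heF i)
  have hext : ∀ i, e i ∈ P.extremePoints ℝ ∧ -e i ∈ P.extremePoints ℝ := fun i =>
    ⟨hF.isExtreme.extremePoints_subset_extremePoints (hFe ▸ he.mem_extremePoints_convexHull i),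
      hFneg.isExtreme.extremePoints_subset_extremePoints (by
        rw [hFe, ← convexHull_neg, neg_range']
        exact he.neg.mem_extremePoints_convexHull i)⟩
  have hlat : ∀ x ∈ P.extremePoints ℝ, IsLatticePt x := fun x hx =>
    hS x (extremePoints_convexHull_subset (hPS ▸ hx))
  obtain ⟨huP, hFP⟩ := hF.eq_setOf_dot_eq ⟨_, heF k⟩ h0 he heF hu
  obtain ⟨w, hwP, hwlat, hwe, hwk⟩ := exists_latticePt_mem_polarDual_dot_eq hPS hdual he
    (fun i => (hext i).1.1) huP hue (fun x hxP hx => hFe ▸ hFP ▸ ⟨hxP, hx⟩) k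
  obtain ⟨n, hn⟩ := hwlat.exists_dot_eq_intCast (hlat _ (hext k).1)
  obtain ⟨m, hm⟩ := hwlat.exists_dot_eq_intCast (hlat v hv)
  have hwv : (m : ℝ) = (n + 1) * q k := by
    rw [← hm, ← hn, hq, dot_sum_smul_of_dot_eq_neg_one hq0 hwe]
  have huv : dot u v = 0 := by simp [hq, dot_sum_smul, hue, hq0]
  have hwnk : dot w (-e k) = -n := by rw [dot_neg_right, hn]
  have hn01 : n = 0 ∨ n = 1 := by
    have h1 : (-1 : ℤ) < n := by exact_mod_cast hn ▸ hwk
    have h2 : -(n : ℝ) ≥ -1 := hwnk ▸ hwP _ (hext k).2.1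
    have h3 : n ≤ 1 := by exact_mod_cast (by linarith : (n : ℝ) ≤ 1)
    omega
  have hm1 : m = -1 := by
    have h1 : (-1 : ℤ) ≤ m := by exact_mod_cast hm ▸ hwP v hv.1
    have h2 : m < 0 := by
      have : (0 : ℝ) ≤ n := by rcases hn01 with rfl | rfl <;> norm_num
      exact_mod_cast (hwv ▸ mul_neg_of_pos_of_neg (by linarith) hk : (m : ℝ) < 0)
    omega
  rcases hn01 with rfl | rfl
  · simpa [hm1] using hwv.symm
  · exact absurd (by rw [hm, hm1]; simp) (hsimp.dot_ne_neg_one_of_update_neg hwP he hext hue hv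
      huv hwe (by simpa using hn))

lemma sum_smul_eq_sub_of_mem_neg_one_zero_one {ι M : Type*} [Fintype ι] [AddCommGroup M]
    [Module ℝ M] {q : ι → ℝ} (hq : ∀ i, q i = -1 ∨ q i = 0 ∨ q i = 1) (f : ι → M) :
    ∑ i, q i • f i =
      ∑ j ∈ Finset.univ.filter (q · = 1), f j - ∑ i ∈ Finset.univ.filter (q · = -1), f i := by
  rw [Finset.sum_filter, Finset.sum_filter, ← Finset.sum_sub_distrib]
  refine Finset.sum_congr rfl fun i _ => ?_
  rcases hq i with h | h | h <;> norm_num [h]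

end

theorem key_lemma_general (d : ℕ) (P F : Set (E d)) (e : Fin d → E d) (u v : E d)
    (hP : IsReflexive P) (hsimp : IsSimplicial P)
    (hF : IsFacet P F) (hFneg : IsFacet P (-F))
    (he : LinearIndependent ℝ e) (hFe : F = convexHull ℝ (Set.range e))
    (hu : ∀ y ∈ F, dot u y = -1)
    (hv : v ∈ Set.extremePoints ℝ P) (hvu : dot u v = 0)
    (q : Fin d → ℝ) (hq : v = ∑ i, q i • e i) :
    (∀ i, q i < 0 ↔ q i = -1) ∧
    ∃ I J : Finset (Fin d), Disjoint I J ∧ I.card = J.card ∧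
      v = ∑ j ∈ J, e j - ∑ i ∈ I, e i := by
  obtain ⟨⟨S, hS, hPS⟩, h0, hdual⟩ := hP
  have hq0 : ∑ i, q i = 0 := by
    have hue : ∀ i, dot u (e i) = -1 := fun i => hu _ (hFe ▸ subset_convexHull ℝ _ ⟨i, rfl⟩)
    simpa [hq, dot_sum_smul, hue] using hvu
  have hneg : ∀ i, q i < 0 → q i = -1 := fun i =>
    coeff_eq_neg_one_of_neg hS hPS hdual (interior_subset h0) hsimp he hFe hF.1 hFneg.1 hu hv hq
      hq0
  have hpos : ∀ i, 0 < q i → q i = 1 := fun i hi => by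
    have := coeff_eq_neg_one_of_neg (q := -q) (k := i) hS hPS hdual (interior_subset h0) hsimp
      he.neg (by rw [hFe, ← convexHull_neg, neg_range']) hFneg.1 (by rw [neg_neg]; exact hF.1)
      (u := -u) (fun y hy => by simpa using hu (-y) hy) hv (by simp [hq]) (by simp [hq0])
      (by simpa using hi)
    simpa using this
  have hq3 : ∀ i, q i = -1 ∨ q i = 0 ∨ q i = 1 := fun i => by
    rcases lt_trichotomy (q i) 0 with h | h | h
    exacts [Or.inl (hneg i h), Or.inr (Or.inl h), Or.inr (Or.inr (hpos i h))]
  refine ⟨fun i => ⟨hneg i, fun h => by linarith⟩, _, _,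
    Finset.disjoint_filter.2 fun i _ h1 h2 => by linarith, ?_,
    hq ▸ sum_smul_eq_sub_of_mem_neg_one_zero_one hq3 e⟩
  have hcard := sum_smul_eq_sub_of_mem_neg_one_zero_one hq3 fun _ => (1 : ℝ)
  simp only [smul_eq_mul, mul_one, hq0, Finset.sum_const, nsmul_eq_mul] at hcard
  exact_mod_cast (sub_eq_zero.1 hcard.symm).symm

theorem key_lemma (d : ℕ) (P F : Set (E d)) (e : Fin d → E d) (u v : E d)
    (hP : IsReflexive P) (hsimp : IsSimplicial P)
    (hF : IsFacet P F) (hFneg : IsFacet P (-F))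
    (he : LinearIndependent ℝ e) (hFe : F = convexHull ℝ (Set.range e))
    (hu : ∀ y ∈ F, dot u y = -1) (huP : ∀ y ∈ P, -1 ≤ dot u y)
    (hv : v ∈ Set.extremePoints ℝ P) (hvu : dot u v = 0)
    (q : Fin d → ℝ) (hq : v = ∑ i, q i • e i) :
    (∀ i, q i < 0 ↔ q i = -1) ∧
    ∃ I J : Finset (Fin d), Disjoint I J ∧ I.card = J.card ∧
      v = ∑ j ∈ J, e j - ∑ i ∈ I, e i :=
  key_lemma_general d P F e u v hP hsimp hF hFneg he hFe hu hv hvu q hq
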